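/- arXiv:2512.21036 — 2 statements merged into one kernel-verified Lean document; each statement's English description precedes it below -/
import Mathlib

section
/- With the same setup (V(η)=(μ²+|η|²)^((p-2)/2)η on ℂ^m, real ellipticity constants c₁ ≤ c₂), for all η₁, η₂ ∈ ℂ^m: |Im⟨V(η₁)-V(η₂), η₁-η₂⟩_ℂ| ≤ √(c₂² − c₁²) · (μ²+|η₁|²+|η₂|²)^((p-2)/2) |η₁-η₂|². -/
/-!
Write `nᵢ = ‖ηᵢ‖`, `rᵢ = (μ² + nᵢ²)^((p-2)/2)`, `M = (μ² + n₁² + n₂²)^((p-2)/2)` and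
`b = Im ⟪η₁, η₂⟫`. The imaginary part in question is `(r₂ - r₁) b`. Restricting the real bounds
to a line, at the points `(n₁, n₂)` and `(n₁, -n₂)`, gives two scalar two-sided bounds; by the identity
`2 n₁ n₂ (r₁ - r₂)(n₁² - n₂²) = (r₁n₁ - r₂n₂)(n₁ - n₂)(n₁ + n₂)² - (r₁n₁ + r₂n₂)(n₁ + n₂)(n₁ - n₂)²`
their difference yields `2 n₁ n₂ |r₁ - r₂| |n₁² - n₂²| ≤ (c₂ - c₁) M (n₁² - n₂²)²`. Combined with
`|b| |n₁² - n₂²| ≤ n₁ n₂ ‖η₁ - η₂‖²` this gives `|Im| ≤ (c₂ - c₁)/2 · M ‖η₁ - η₂‖²`, and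
`(c₂ - c₁)/2 ≤ √(c₂² - c₁²)` as soon as `c₁ ≥ 0`.
-/

open RCLike

lemma abs_mul_sq_sub_sq_le_of_sq_add_sq_le {n₁ n₂ a b : ℝ} (hn₁ : 0 ≤ n₁) (hn₂ : 0 ≤ n₂)
    (hab : a ^ 2 + b ^ 2 ≤ (n₁ * n₂) ^ 2) :
    |b * (n₁ ^ 2 - n₂ ^ 2)| ≤ n₁ * n₂ * (n₁ ^ 2 + n₂ ^ 2 - 2 * a) := by
  have hP : 0 ≤ n₁ * n₂ := mul_nonneg hn₁ hn₂
  have ha : |a| ≤ n₁ * n₂ := abs_le_of_sq_le_sq (by nlinarith [sq_nonneg b]) hP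
  obtain ⟨ha₁, ha₂⟩ := abs_le.mp ha
  set s := (n₁ * n₂ - a) * (n₁ + n₂) ^ 2
  set t := (n₁ * n₂ + a) * (n₁ - n₂) ^ 2
  -- `s + t = 2 n₁ n₂ (n₁² + n₂² - 2a)`, so AM-GM on `s * t` finishes
  have hst : b ^ 2 * (n₁ ^ 2 - n₂ ^ 2) ^ 2 ≤ s * t := by
    have : s * t = ((n₁ * n₂) ^ 2 - a ^ 2) * (n₁ ^ 2 - n₂ ^ 2) ^ 2 := by ring
    rw [this]
    exact mul_le_mul_of_nonneg_right (by linarith) (sq_nonneg _)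
  refine abs_le_of_sq_le_sq ?_ (mul_nonneg hP (by nlinarith))
  nlinarith [sq_nonneg (s - t)]

lemma abs_two_mul_mul_sub_mul_sq_sub_sq_le {n₁ n₂ r₁ r₂ M c₁ c₂ : ℝ}
    (hsub : c₁ * M * (n₁ - n₂) ^ 2 ≤ (r₁ * n₁ - r₂ * n₂) * (n₁ - n₂) ∧
      (r₁ * n₁ - r₂ * n₂) * (n₁ - n₂) ≤ c₂ * M * (n₁ - n₂) ^ 2)
    (hadd : c₁ * M * (n₁ + n₂) ^ 2 ≤ (r₁ * n₁ + r₂ * n₂) * (n₁ + n₂) ∧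
      (r₁ * n₁ + r₂ * n₂) * (n₁ + n₂) ≤ c₂ * M * (n₁ + n₂) ^ 2) :
    |2 * n₁ * n₂ * (r₁ - r₂) * (n₁ ^ 2 - n₂ ^ 2)| ≤ (c₂ - c₁) * M * (n₁ ^ 2 - n₂ ^ 2) ^ 2 := by
  have key : 2 * n₁ * n₂ * (r₁ - r₂) * (n₁ ^ 2 - n₂ ^ 2) =
      (r₁ * n₁ - r₂ * n₂) * (n₁ - n₂) * (n₁ + n₂) ^ 2 -
        (r₁ * n₁ + r₂ * n₂) * (n₁ + n₂) * (n₁ - n₂) ^ 2 := by ring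
  have hsq : (n₁ ^ 2 - n₂ ^ 2) ^ 2 = (n₁ - n₂) ^ 2 * (n₁ + n₂) ^ 2 := by ring
  obtain ⟨hsubl, hsubr⟩ := hsub
  obtain ⟨haddl, haddr⟩ := hadd
  have := mul_le_mul_of_nonneg_right hsubl (sq_nonneg (n₁ + n₂))
  have := mul_le_mul_of_nonneg_right hsubr (sq_nonneg (n₁ + n₂))
  have := mul_le_mul_of_nonneg_right haddl (sq_nonneg (n₁ - n₂))
  have := mul_le_mul_of_nonneg_right haddr (sq_nonneg (n₁ - n₂))
  rw [key, hsq, abs_le]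
  constructor <;> linarith

lemma sub_div_two_le_sqrt_sq_sub_sq {c₁ c₂ : ℝ} (hc₁ : 0 ≤ c₁) (hc₂ : c₁ ≤ c₂) :
    (c₂ - c₁) / 2 ≤ √(c₂ ^ 2 - c₁ ^ 2) :=
  Real.le_sqrt_of_sq_le (by nlinarith)

section InnerProductSpace

variable {𝕜 E : Type*} [RCLike 𝕜] [NormedAddCommGroup E] [InnerProductSpace 𝕜 E]

lemma abs_im_inner_mul_sq_norm_sub_sq_norm_le (x y : E) :
    |im (inner 𝕜 x y) * (‖x‖ ^ 2 - ‖y‖ ^ 2)| ≤ ‖x‖ * ‖y‖ * ‖x - y‖ ^ 2 := by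
  rw [norm_sub_sq (𝕜 := 𝕜)]
  have hab : re (inner 𝕜 x y) ^ 2 + im (inner 𝕜 x y) ^ 2 ≤ (‖x‖ * ‖y‖) ^ 2 := by
    rw [sq, sq, ← norm_sq_eq_def, sq_le_sq₀ (norm_nonneg _) (by positivity)]
    exact norm_inner_le_norm x y
  convert abs_mul_sq_sub_sq_le_of_sq_add_sq_le (norm_nonneg x) (norm_nonneg y) hab using 2
  ring

lemma im_inner_smul_sub_smul_sub (r₁ r₂ : ℝ) (x y : E) :
    im (inner 𝕜 ((r₁ : 𝕜) • x - (r₂ : 𝕜) • y) (x - y)) = (r₂ - r₁) * im (inner 𝕜 x y) := by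
  simp only [inner_sub_left, inner_sub_right, inner_smul_left, conj_ofReal, map_sub,
    im_ofReal_mul, inner_self_im]
  rw [← inner_conj_symm x y, conj_im]
  ring

lemma two_mul_abs_im_inner_smul_sub_smul_le {x y : E} {r₁ r₂ K : ℝ} (hK : 0 ≤ K)
    (hr : ‖x‖ = ‖y‖ → r₁ = r₂)
    (h : |2 * ‖x‖ * ‖y‖ * (r₁ - r₂) * (‖x‖ ^ 2 - ‖y‖ ^ 2)| ≤ K * (‖x‖ ^ 2 - ‖y‖ ^ 2) ^ 2) :
    2 * |im (inner 𝕜 ((r₁ : 𝕜) • x - (r₂ : 𝕜) • y) (x - y))| ≤ K * ‖x - y‖ ^ 2 := by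
  rw [im_inner_smul_sub_smul_sub]
  by_cases hD : ‖x‖ ^ 2 - ‖y‖ ^ 2 = 0
  · have hxy : ‖x‖ = ‖y‖ := by
      rwa [sub_eq_zero, sq_eq_sq₀ (norm_nonneg _) (norm_nonneg _)] at hD
    simp only [hr hxy, sub_self, zero_mul, abs_zero, mul_zero]
    positivity
  have hb : |im (inner 𝕜 x y)| ≤ ‖x‖ * ‖y‖ := (abs_im_le_norm _).trans (norm_inner_le_norm x y)
  by_cases hP : ‖x‖ * ‖y‖ = 0
  · rw [hP, abs_nonpos_iff] at hb
    simp only [hb, mul_zero, abs_zero]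
    positivity
  have hPD : 0 < ‖x‖ * ‖y‖ * |‖x‖ ^ 2 - ‖y‖ ^ 2| :=
    mul_pos (lt_of_le_of_ne (by positivity) (Ne.symm hP)) (abs_pos.mpr hD)
  refine le_of_mul_le_mul_left ?_ hPD
  calc ‖x‖ * ‖y‖ * |‖x‖ ^ 2 - ‖y‖ ^ 2| * (2 * |(r₂ - r₁) * im (inner 𝕜 x y)|)
      = |2 * ‖x‖ * ‖y‖ * (r₁ - r₂) * (‖x‖ ^ 2 - ‖y‖ ^ 2)| * |im (inner 𝕜 x y)| := by
        simp only [abs_mul, abs_two, abs_norm, abs_sub_comm r₁ r₂]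
        ring
    _ ≤ K * (‖x‖ ^ 2 - ‖y‖ ^ 2) ^ 2 * |im (inner 𝕜 x y)| :=
        mul_le_mul_of_nonneg_right h (abs_nonneg _)
    _ = K * |‖x‖ ^ 2 - ‖y‖ ^ 2| * |im (inner 𝕜 x y) * (‖x‖ ^ 2 - ‖y‖ ^ 2)| := by
        rw [abs_mul, ← sq_abs (‖x‖ ^ 2 - ‖y‖ ^ 2)]
        ring
    _ ≤ K * |‖x‖ ^ 2 - ‖y‖ ^ 2| * (‖x‖ * ‖y‖ * ‖x - y‖ ^ 2) :=
        mul_le_mul_of_nonneg_left (abs_im_inner_mul_sq_norm_sub_sq_norm_le x y) (by positivity)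
    _ = ‖x‖ * ‖y‖ * |‖x‖ ^ 2 - ‖y‖ ^ 2| * (K * ‖x - y‖ ^ 2) := by ring

end InnerProductSpace

lemma radial_bounds_on_line {F : Type*} [NormedAddCommGroup F] [InnerProductSpace ℝ F]
    {e : F} (he : ‖e‖ = 1) {μ q c₁ c₂ : ℝ}
    (hV : ∀ y z : F,
      c₁ * (μ ^ 2 + ‖y‖ ^ 2 + ‖z‖ ^ 2) ^ q * ‖y - z‖ ^ 2 ≤
        inner ℝ ((μ ^ 2 + ‖y‖ ^ 2) ^ q • y - (μ ^ 2 + ‖z‖ ^ 2) ^ q • z) (y - z) ∧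
      inner ℝ ((μ ^ 2 + ‖y‖ ^ 2) ^ q • y - (μ ^ 2 + ‖z‖ ^ 2) ^ q • z) (y - z) ≤
        c₂ * (μ ^ 2 + ‖y‖ ^ 2 + ‖z‖ ^ 2) ^ q * ‖y - z‖ ^ 2)
    (s t : ℝ) :
    c₁ * (μ ^ 2 + s ^ 2 + t ^ 2) ^ q * (s - t) ^ 2 ≤
        ((μ ^ 2 + s ^ 2) ^ q * s - (μ ^ 2 + t ^ 2) ^ q * t) * (s - t) ∧
      ((μ ^ 2 + s ^ 2) ^ q * s - (μ ^ 2 + t ^ 2) ^ q * t) * (s - t) ≤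
        c₂ * (μ ^ 2 + s ^ 2 + t ^ 2) ^ q * (s - t) ^ 2 := by
  have hnorm (a : ℝ) : ‖a • e‖ ^ 2 = a ^ 2 := by
    rw [norm_smul, he, mul_one, Real.norm_eq_abs, sq_abs]
  have hinner : inner ℝ ((μ ^ 2 + s ^ 2) ^ q • s • e - (μ ^ 2 + t ^ 2) ^ q • t • e) ((s - t) • e) =
      ((μ ^ 2 + s ^ 2) ^ q * s - (μ ^ 2 + t ^ 2) ^ q * t) * (s - t) := by
    rw [smul_smul, smul_smul, ← sub_smul, real_inner_smul_left, real_inner_smul_right,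
      real_inner_self_eq_norm_sq, he]
    ring
  simpa only [hnorm, ← sub_smul, hinner] using hV (s • e) (t • e)

theorem pLaplace_complex_im_upper_bound_general (m : ℕ) (p μ c₁ c₂ : ℝ)
    (hc₁ : 0 < c₁) (hc₂ : c₁ ≤ c₂)
    (hell : ∀ y z : EuclideanSpace ℝ (Fin m ⊕ Fin m),
      c₁ * (μ ^ 2 + ‖y‖ ^ 2 + ‖z‖ ^ 2) ^ ((p - 2) / 2) * ‖y - z‖ ^ 2 ≤
        @inner ℝ _ _
          (((μ ^ 2 + ‖y‖ ^ 2) ^ ((p - 2) / 2)) • y - ((μ ^ 2 + ‖z‖ ^ 2) ^ ((p - 2) / 2)) • z)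
          (y - z) ∧
      @inner ℝ _ _
          (((μ ^ 2 + ‖y‖ ^ 2) ^ ((p - 2) / 2)) • y - ((μ ^ 2 + ‖z‖ ^ 2) ^ ((p - 2) / 2)) • z)
          (y - z) ≤
        c₂ * (μ ^ 2 + ‖y‖ ^ 2 + ‖z‖ ^ 2) ^ ((p - 2) / 2) * ‖y - z‖ ^ 2) :
    ∀ η₁ η₂ : EuclideanSpace ℂ (Fin m),
      |(@inner ℂ _ _
          ((((μ ^ 2 + ‖η₁‖ ^ 2) ^ ((p - 2) / 2) : ℝ)) • η₁ -
            (((μ ^ 2 + ‖η₂‖ ^ 2) ^ ((p - 2) / 2) : ℝ)) • η₂)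
          (η₁ - η₂)).im| ≤
        Real.sqrt (c₂ ^ 2 - c₁ ^ 2) *
          (μ ^ 2 + ‖η₁‖ ^ 2 + ‖η₂‖ ^ 2) ^ ((p - 2) / 2) * ‖η₁ - η₂‖ ^ 2 := by
  intro η₁ η₂
  set M := (μ ^ 2 + ‖η₁‖ ^ 2 + ‖η₂‖ ^ 2) ^ ((p - 2) / 2)
  have hM : 0 ≤ M := by positivity
  have hradial : |2 * ‖η₁‖ * ‖η₂‖ * ((μ ^ 2 + ‖η₁‖ ^ 2) ^ ((p - 2) / 2) -
      (μ ^ 2 + ‖η₂‖ ^ 2) ^ ((p - 2) / 2)) * (‖η₁‖ ^ 2 - ‖η₂‖ ^ 2)| ≤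
      (c₂ - c₁) * M * (‖η₁‖ ^ 2 - ‖η₂‖ ^ 2) ^ 2 := by
    rcases isEmpty_or_nonempty (Fin m) with _ | ⟨⟨i⟩⟩
    · simp [Subsingleton.elim η₁ 0, Subsingleton.elim η₂ 0]
    have he : ‖EuclideanSpace.single (Sum.inl i : Fin m ⊕ Fin m) (1 : ℝ)‖ = 1 := by simp
    refine abs_two_mul_mul_sub_mul_sq_sub_sq_le (radial_bounds_on_line he hell _ _) ?_
    simpa only [neg_sq, sub_neg_eq_add, mul_neg] using radial_bounds_on_line he hell ‖η₁‖ (-‖η₂‖)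
  have h := two_mul_abs_im_inner_smul_sub_smul_le (𝕜 := ℂ) (mul_nonneg (sub_nonneg.2 hc₂) hM)
    (fun h => by rw [h]) hradial
  simp only [RCLike.ofReal_eq_complex_ofReal, Complex.coe_smul, RCLike.im_to_complex] at h
  calc _ ≤ (c₂ - c₁) / 2 * M * ‖η₁ - η₂‖ ^ 2 := by linarith
    _ ≤ _ := by gcongr; exact sub_div_two_le_sqrt_sq_sub_sq hc₁.le hc₂

/-- Sectorial bound on the imaginary part of the complex pairing of the regularized
p-Laplacian vector field: assuming the real ellipticity bounds with constants `c₁ ≤ c₂`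
for `V` on ℝ^(2m) (identified with ℂ^m), for all `η₁ η₂ ∈ ℂ^m`,
`|Im ⟨V(η₁) - V(η₂), η₁ - η₂⟩| ≤ √(c₂² − c₁²) (μ² + |η₁|² + |η₂|²)^((p-2)/2) |η₁ - η₂|²`. -/
theorem pLaplace_complex_im_upper_bound (m : ℕ) (p μ c₁ c₂ : ℝ)
    (hp : 1 < p) (hμ0 : 0 ≤ μ) (hμ1 : μ ≤ 1) (hc₁ : 0 < c₁) (hc₂ : c₁ ≤ c₂)
    (hell : ∀ y z : EuclideanSpace ℝ (Fin m ⊕ Fin m),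
      c₁ * (μ ^ 2 + ‖y‖ ^ 2 + ‖z‖ ^ 2) ^ ((p - 2) / 2) * ‖y - z‖ ^ 2 ≤
        @inner ℝ _ _
          (((μ ^ 2 + ‖y‖ ^ 2) ^ ((p - 2) / 2)) • y - ((μ ^ 2 + ‖z‖ ^ 2) ^ ((p - 2) / 2)) • z)
          (y - z) ∧
      @inner ℝ _ _
          (((μ ^ 2 + ‖y‖ ^ 2) ^ ((p - 2) / 2)) • y - ((μ ^ 2 + ‖z‖ ^ 2) ^ ((p - 2) / 2)) • z)
          (y - z) ≤
        c₂ * (μ ^ 2 + ‖y‖ ^ 2 + ‖z‖ ^ 2) ^ ((p - 2) / 2) * ‖y - z‖ ^ 2) :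
    ∀ η₁ η₂ : EuclideanSpace ℂ (Fin m),
      |(@inner ℂ _ _
          ((((μ ^ 2 + ‖η₁‖ ^ 2) ^ ((p - 2) / 2) : ℝ)) • η₁ -
            (((μ ^ 2 + ‖η₂‖ ^ 2) ^ ((p - 2) / 2) : ℝ)) • η₂)
          (η₁ - η₂)).im| ≤
        Real.sqrt (c₂ ^ 2 - c₁ ^ 2) *
          (μ ^ 2 + ‖η₁‖ ^ 2 + ‖η₂‖ ^ 2) ^ ((p - 2) / 2) * ‖η₁ - η₂‖ ^ 2 :=
  pLaplace_complex_im_upper_bound_general m p μ c₁ c₂ hc₁ hc₂ hell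
end

section
/- Let Ω ⊂ ℝⁿ be (δ₀, r₀)-Reifenberg flat with 0 < δ₀ < 1/8, and let 𝒱₁, 𝒱₂ ⊆ Ω be measurable with |𝒱₁| ≤ ε|B_{R₀}| for some R₀ ∈ (0, r₀] and ε ∈ (0,1). Assume that for all x₀ ∈ Ω and ρ ∈ (0, R₀]: if B_ρ(x₀) ∩ Ω ⊄ 𝒱₂ then |B_ρ(x₀) ∩ 𝒱₁| < ε|B_ρ(x₀)|. Then |𝒱₁| ≤ 15ⁿ ε |𝒱₂|. -/
/-!
Reifenberg flatness makes `Ω` uniformly thick: if `B_{5ρ/24}(x) ⊄ Ω` there is a boundary point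
`x₀` within `5ρ/24` of `x`, and moving `x` along the flat direction `ν` at `x₀` past the slab of
width `δ r` yields a ball of radius `5ρ/24` inside `B_ρ(x) ∩ Ω`; hence
`|B_ρ(x)| ≤ (24/5)ⁿ |B_ρ(x) ∩ Ω|`.

At a Lebesgue density point `x` of `𝒱₁` the set `𝒱₁` fills more than an `ε`-fraction of small
balls, and by `|𝒱₁| ≤ ε |B_{R₀}|` at most an `ε`-fraction of balls beyond `R₀`. The last radius
`ρ_x ≤ R₀` where it fills at least an `ε`-fraction satisfies `B_{ρ_x}(x) ∩ Ω ⊆ 𝒱₂` by hypothesis,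
while `𝒱₁` is `ε`-sparse in every larger ball. A Vitali subfamily with enlargement factor
`31/10 < 25/8` then bounds `|𝒱₁|` by `ε (25/8)ⁿ (24/5)ⁿ = 15ⁿ ε` times the measure of disjoint
pieces `B_{ρ_x}(x) ∩ 𝒱₂` of `𝒱₂`.
-/

open MeasureTheory
open scoped ENNReal

/-- `Ω` is `(δ₀, r₀)`-Reifenberg flat: at every boundary point `x₀` and scale
`0 < r < (1 − δ₀) r₀` there is a direction `ν` such that, with `δ = δ₀/(1−δ₀)`,
`B_r(x₀) ∩ {⟨ν, x − x₀⟩ > δ r} ⊆ Ω` and `B_r(x₀) ∩ Ω ⊆ {⟨ν, x − x₀⟩ > −δ r}`. -/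
def IsReifenbergFlat {n : ℕ} (Ω : Set (EuclideanSpace ℝ (Fin n))) (δ₀ r₀ : ℝ) : Prop :=
  ∀ x₀ ∈ frontier Ω, ∀ r : ℝ, 0 < r → r < (1 - δ₀) * r₀ →
    ∃ ν : EuclideanSpace ℝ (Fin n), ‖ν‖ = 1 ∧
      (Metric.ball x₀ r ∩ {x | δ₀ / (1 - δ₀) * r < @inner ℝ _ _ ν (x - x₀)} ⊆ Ω) ∧
      (Metric.ball x₀ r ∩ Ω ⊆ {x | -(δ₀ / (1 - δ₀) * r) < @inner ℝ _ _ ν (x - x₀)})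

open Metric Set Filter Topology

theorem ball_add_smul_subset_inter_halfSpace {E : Type*} [NormedAddCommGroup E]
    [InnerProductSpace ℝ E] {x x₀ ν : E} (hν : ‖ν‖ = 1) {s a r : ℝ} (ha : 0 ≤ a)
    (hx : dist x x₀ < s) (hxν : -a < inner ℝ ν (x - x₀)) (hr : 3 * s + 2 * a ≤ r) :
    ball (x + (s + 2 * a) • ν) s ⊆ ball x₀ r ∩ {y | a < inner ℝ ν (y - x₀)} := by
  set c := s + 2 * a
  have hc : dist (x + c • ν) x = c := by
    rw [dist_self_add_left, norm_smul, hν, mul_one,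
      Real.norm_of_nonneg (by linarith [dist_nonneg (x := x) (y := x₀)])]
  intro y hy
  rw [mem_ball] at hy
  constructor
  · calc dist y x₀ ≤ dist y (x + c • ν) + dist (x + c • ν) x + dist x x₀ := dist_triangle4 ..
      _ < r := by linarith
  · have hsplit : inner ℝ ν (y - x₀) = inner ℝ ν (y - (x + c • ν)) + c + inner ℝ ν (x - x₀) := by
      rw [show y - x₀ = (y - (x + c • ν)) + c • ν + (x - x₀) by abel, inner_add_right,
        inner_add_right, real_inner_smul_right, real_inner_self_eq_norm_sq, hν]
      ring
    have hlow : -dist y (x + c • ν) ≤ inner ℝ ν (y - (x + c • ν)) := by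
      have := abs_real_inner_le_norm ν (y - (x + c • ν))
      rw [hν, one_mul, ← dist_eq_norm] at this
      exact (abs_le.1 this).1
    show a < inner ℝ ν (y - x₀)
    linarith

theorem IsReifenbergFlat.exists_ball_subset_ball_inter {n : ℕ}
    {Ω : Set (EuclideanSpace ℝ (Fin n))} {δ₀ r₀ : ℝ} (hΩ : IsReifenbergFlat Ω δ₀ r₀)
    (hδ₀ : 0 < δ₀) (hδ₀' : δ₀ < 1 / 8) {x : EuclideanSpace ℝ (Fin n)} (hx : x ∈ Ω)
    {ρ : ℝ} (hρ : 0 < ρ) (hρr₀ : ρ ≤ r₀) :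
    ∃ y, ball y (5 / 24 * ρ) ⊆ ball x ρ ∩ Ω := by
  by_cases hball : ball x (5 / 24 * ρ) ⊆ Ω
  · exact ⟨x, subset_inter (ball_subset_ball (by linarith)) hball⟩
  obtain ⟨z, hz, hzΩ⟩ := not_subset.1 hball
  obtain ⟨x₀, hx₀, hxx₀⟩ :=
    exists_mem_frontier_infDist_compl_eq_dist hx (ne_univ_iff_exists_notMem _ |>.2 ⟨z, hzΩ⟩)
  have hdist : dist x x₀ < 5 / 24 * ρ :=
    hxx₀ ▸ (infDist_le_dist_of_mem hzΩ).trans_lt (mem_ball'.1 hz)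
  -- Since `δ r < ρ / 8` at the scale `r = 7ρ/8`, the radius `s = 5ρ/24` satisfies both
  -- `3 s + 2 δ r ≤ r` and `2 s + 2 δ r ≤ ρ`.
  obtain ⟨ν, hν, hin, hout⟩ := hΩ x₀ hx₀ (7 / 8 * ρ) (by positivity) (by nlinarith)
  have hδ : 0 ≤ δ₀ / (1 - δ₀) ∧ δ₀ / (1 - δ₀) < 1 / 7 :=
    ⟨div_nonneg hδ₀.le (by linarith), (div_lt_iff₀ (by linarith)).2 (by linarith)⟩
  have ha' : δ₀ / (1 - δ₀) * (7 / 8 * ρ) < ρ / 8 := by nlinarith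
  set a := δ₀ / (1 - δ₀) * (7 / 8 * ρ)
  have ha : 0 ≤ a := mul_nonneg hδ.1 (by positivity)
  have hxν : -a < inner ℝ ν (x - x₀) := hout ⟨mem_ball.2 (by linarith), hx⟩
  refine ⟨x + (5 / 24 * ρ + 2 * a) • ν, subset_inter (ball_subset_ball' ?_)
    ((ball_add_smul_subset_inter_halfSpace hν ha hdist hxν (by linarith)).trans hin)⟩
  rw [dist_self_add_left, norm_smul, hν, mul_one, Real.norm_of_nonneg (by positivity)]
  linarith

theorem IsReifenbergFlat.volume_ball_mul_le {n : ℕ}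
    {Ω : Set (EuclideanSpace ℝ (Fin n))} {δ₀ r₀ : ℝ} (hΩ : IsReifenbergFlat Ω δ₀ r₀)
    (hδ₀ : 0 < δ₀) (hδ₀' : δ₀ < 1 / 8) {x : EuclideanSpace ℝ (Fin n)} (hx : x ∈ Ω)
    {ρ : ℝ} (hρ : 0 < ρ) (hρr₀ : ρ ≤ r₀) {c : ℝ} (hc : 0 < c) :
    volume (ball x (c * ρ)) ≤ ENNReal.ofReal ((24 / 5 * c) ^ n) * volume (ball x ρ ∩ Ω) := by
  obtain ⟨y, hy⟩ := hΩ.exists_ball_subset_ball_inter hδ₀ hδ₀' hx hρ hρr₀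
  calc volume (ball x (c * ρ))
      = ENNReal.ofReal ((24 / 5 * c) ^ n) * volume (ball y (5 / 24 * ρ)) := by
        rw [Measure.addHaar_ball_mul_of_pos _ _ hc, Measure.addHaar_ball_mul_of_pos _ _
          (by norm_num), finrank_euclideanSpace_fin, ← mul_assoc,
          ← ENNReal.ofReal_mul (by positivity), ← mul_pow]
        ring_nf
    _ ≤ ENNReal.ofReal ((24 / 5 * c) ^ n) * volume (ball x ρ ∩ Ω) := by gcongr

section AddHaar

variable {E : Type*} [NormedAddCommGroup E] [NormedSpace ℝ E] [MeasurableSpace E]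
  [BorelSpace E] [FiniteDimensional ℝ E] (μ : Measure E) [μ.IsAddHaarMeasure]

theorem closedBall_ae_eq_ball (x : E) {r : ℝ} (hr : r ≠ 0) : closedBall x r =ᵐ[μ] ball x r :=
  ae_eq_set.2 ⟨by rw [closedBall_sdiff_ball, Measure.addHaar_sphere_of_ne_zero μ x hr],
    by rw [sdiff_eq_empty.2 ball_subset_closedBall, measure_empty]⟩

theorem continuousOn_addHaar_ball (x : E) : ContinuousOn (fun r => μ (ball x r)) (Ioi 0) := by
  refine ContinuousOn.congr (f := fun r => ENNReal.ofReal (r ^ Module.finrank ℝ E) * μ (ball 0 1))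
    ?_ fun r hr => Measure.addHaar_ball_of_pos μ x hr
  exact ((ENNReal.continuous_mul_const measure_ball_lt_top.ne).comp
    (ENNReal.continuous_ofReal.comp (continuous_pow _))).continuousOn

theorem exists_radius_mem_Ioc_le_measure_ball_inter {V : Set E} {x : E}
    (hx : Tendsto (fun r => μ (V ∩ closedBall x r) / μ (closedBall x r)) (𝓝[>] 0) (𝓝 1))
    {ε R : ℝ} (hε : ε < 1) (hR : 0 < R) :
    ∃ ρ ∈ Ioc 0 R, ENNReal.ofReal ε * μ (ball x ρ) ≤ μ (ball x ρ ∩ V) := by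
  obtain ⟨ρ, hlt, hρ⟩ :=
    ((hx.eventually (lt_mem_nhds (ENNReal.ofReal_lt_one.2 hε))).and (Ioc_mem_nhdsGT hR)).exists
  have hae := closedBall_ae_eq_ball μ x hρ.1.ne'
  refine ⟨ρ, hρ, ?_⟩
  rw [← measure_congr hae, inter_comm, ← measure_congr ((ae_eq_refl V).inter hae)]
  exact ((ENNReal.lt_div_iff_mul_lt (.inl (measure_closedBall_pos μ x hρ.1).ne')
    (.inl measure_closedBall_lt_top.ne)).1 hlt).le

theorem exists_maximal_radius_le_measure_ball_inter {V : Set E} {x : E} {ε R : ℝ}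
    (hV : μ V ≤ ENNReal.ofReal ε * μ (ball 0 R))
    (h : ∃ ρ ∈ Ioc 0 R, ENNReal.ofReal ε * μ (ball x ρ) ≤ μ (ball x ρ ∩ V)) :
    ∃ ρ ∈ Ioc 0 R, ENNReal.ofReal ε * μ (ball x ρ) ≤ μ (ball x ρ ∩ V) ∧
      ∀ ρ' > ρ, μ (ball x ρ' ∩ V) ≤ ENNReal.ofReal ε * μ (ball x ρ') := by
  set S := {ρ ∈ Ioc 0 R | ENNReal.ofReal ε * μ (ball x ρ) ≤ μ (ball x ρ ∩ V)}
  obtain ⟨ρ₀, hρ₀⟩ := h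
  have hne : S.Nonempty := ⟨ρ₀, hρ₀⟩
  have hbdd : BddAbove S := ⟨R, fun ρ hρ => hρ.1.2⟩
  have hpos : 0 < sSup S := hρ₀.1.1.trans_le (le_csSup hbdd hρ₀)
  refine ⟨sSup S, ⟨hpos, csSup_le hne fun ρ hρ => hρ.1.2⟩, ?_, fun ρ' hρ' => ?_⟩
  · have hcont : ContinuousWithinAt (fun r => ENNReal.ofReal ε * μ (ball x r)) S (sSup S) :=
      ((ENNReal.continuous_const_mul ENNReal.ofReal_ne_top).continuousAt.comp
        ((continuousOn_addHaar_ball μ x).continuousAt (Ioi_mem_nhds hpos))).continuousWithinAt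
    refine hcont.closure_le (csSup_mem_closure hne hbdd) continuousWithinAt_const
      fun ρ hρ => hρ.2.trans ?_
    exact measure_mono (inter_subset_inter_left _ (ball_subset_ball (le_csSup hbdd hρ)))
  · by_cases hρ'R : ρ' ≤ R
    · by_contra! hlt
      exact hρ'.not_ge (le_csSup hbdd ⟨⟨hpos.trans hρ', hρ'R⟩, hlt.le⟩)
    · calc μ (ball x ρ' ∩ V) ≤ μ V := measure_mono inter_subset_right
        _ ≤ ENNReal.ofReal ε * μ (ball x R) := by rwa [Measure.addHaar_ball_center μ x]
        _ ≤ ENNReal.ofReal ε * μ (ball x ρ') := by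
          gcongr; exact (not_le.1 hρ'R).le

end AddHaar

theorem measure_le_restrict_sep_of_ae {α : Type*} [MeasurableSpace α] {μ : Measure α}
    {s : Set α} {p : α → Prop} (h : ∀ᵐ x ∂μ.restrict s, p x) :
    μ s ≤ μ.restrict s {x ∈ s | p x} := by
  have hnull : μ {x ∈ s | ¬p x} = 0 :=
    measure_mono_null (fun x hx => (⟨hx.2, hx.1⟩ : x ∈ {x | ¬p x} ∩ s))
      (nonpos_iff_eq_zero.1 ((Measure.le_restrict_apply _ _).trans_eq (ae_iff.1 h)))
  calc μ s ≤ μ ({x ∈ s | p x} ∪ {x ∈ s | ¬p x}) :=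
        measure_mono fun x hx => (em (p x)).imp (⟨hx, ·⟩) (⟨hx, ·⟩)
    _ ≤ μ {x ∈ s | p x} := (measure_union_le _ _).trans_eq (by rw [hnull, add_zero])
    _ ≤ μ.restrict s {x ∈ s | p x} :=
        (Measure.le_restrict_apply _ _).trans_eq' (by rw [inter_eq_left.2 (sep_subset _ _)])

theorem measure_le_mul_of_forall_exists_radius {α : Type*} [PseudoMetricSpace α]
    [TopologicalSpace.SeparableSpace α] [MeasurableSpace α] [OpensMeasurableSpace α]
    (μ ν : Measure α) {s : Set α} {τ R : ℝ} {C : ℝ≥0∞} (hτ : 3 < τ)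
    (h : ∀ x ∈ s, ∃ ρ, 0 < ρ ∧ ρ ≤ R ∧ μ (closedBall x (τ * ρ)) ≤ C * ν (ball x ρ)) :
    μ s ≤ C * ν univ := by
  choose! ρ hρ hρR hball using h
  obtain ⟨u, hus, hdisj, hcover⟩ :=
    Vitali.exists_disjoint_subfamily_covering_enlargement_closedBall s id ρ R hρR τ hτ
  have hdisj' : u.PairwiseDisjoint fun x => ball x (ρ x) :=
    hdisj.mono fun _ => ball_subset_closedBall
  have hu : u.Countable :=
    hdisj'.countable_of_isOpen (fun _ _ => isOpen_ball) fun x hx => nonempty_ball.2 (hρ x (hus hx))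
  calc μ s ≤ μ (⋃ x ∈ u, closedBall x (τ * ρ x)) := measure_mono fun y hy => by
        obtain ⟨x, hx, hsub⟩ := hcover y hy
        exact mem_biUnion hx (hsub (mem_closedBall_self (hρ y hy).le))
    _ ≤ ∑' x : u, μ (closedBall x (τ * ρ x)) := measure_biUnion_le μ hu _
    _ ≤ ∑' x : u, C * ν (ball x (ρ x)) := ENNReal.tsum_le_tsum fun x => hball x (hus x.2)
    _ = C * ν (⋃ x ∈ u, ball x (ρ x)) := by
        rw [ENNReal.tsum_mul_left, measure_biUnion hu hdisj' fun _ _ => measurableSet_ball]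
    _ ≤ C * ν univ := by gcongr; exact subset_univ _

theorem IsReifenbergFlat.volume_closedBall_inter_le {n : ℕ}
    {Ω V₁ V₂ : Set (EuclideanSpace ℝ (Fin n))} {δ₀ r₀ : ℝ} (hΩ : IsReifenbergFlat Ω δ₀ r₀)
    (hδ₀ : 0 < δ₀) (hδ₀' : δ₀ < 1 / 8) {x : EuclideanSpace ℝ (Fin n)} (hx : x ∈ Ω)
    {ρ ε : ℝ} (hρ : 0 < ρ) (hρr₀ : ρ ≤ r₀) (hsub : ball x ρ ∩ Ω ⊆ V₂)
    (hsparse : volume (ball x (25 / 8 * ρ) ∩ V₁) ≤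
      ENNReal.ofReal ε * volume (ball x (25 / 8 * ρ))) :
    volume (closedBall x (31 / 10 * ρ) ∩ V₁) ≤
      15 ^ n * ENNReal.ofReal ε * volume (ball x ρ ∩ V₂) := by
  have h15 : ENNReal.ofReal ((24 / 5 * (25 / 8)) ^ n) = 15 ^ n := by norm_num [ENNReal.ofReal_pow]
  calc volume (closedBall x (31 / 10 * ρ) ∩ V₁) ≤ volume (ball x (25 / 8 * ρ) ∩ V₁) := by
        gcongr; exact closedBall_subset_ball (by linarith)
    _ ≤ ENNReal.ofReal ε * volume (ball x (25 / 8 * ρ)) := hsparse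
    _ ≤ ENNReal.ofReal ε * (15 ^ n * volume (ball x ρ ∩ Ω)) := by
        rw [← h15]; gcongr
        exact hΩ.volume_ball_mul_le hδ₀ hδ₀' hx hρ hρr₀ (by norm_num)
    _ ≤ 15 ^ n * ENNReal.ofReal ε * volume (ball x ρ ∩ V₂) := by
        rw [mul_left_comm, ← mul_assoc]
        exact mul_le_mul_right (measure_mono (subset_inter inter_subset_left hsub)) _

theorem reifenberg_vitali_density_general {n : ℕ} (Ω 𝒱₁ 𝒱₂ : Set (EuclideanSpace ℝ (Fin n)))
    (δ₀ r₀ R₀ ε : ℝ) (hδ₀ : 0 < δ₀) (hδ₀' : δ₀ < 1 / 8)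
    (hΩ : IsReifenbergFlat Ω δ₀ r₀)
    (h₁Ω : 𝒱₁ ⊆ Ω)
    (hR₀ : 0 < R₀) (hR₀' : R₀ ≤ r₀) (hε' : ε < 1)
    (hsmall : volume 𝒱₁ ≤
      ENNReal.ofReal ε * volume (Metric.ball (0 : EuclideanSpace ℝ (Fin n)) R₀))
    (hcond : ∀ x₀ ∈ Ω, ∀ ρ : ℝ, 0 < ρ → ρ ≤ R₀ →
      ¬ (Metric.ball x₀ ρ ∩ Ω ⊆ 𝒱₂) →
        volume (Metric.ball x₀ ρ ∩ 𝒱₁) < ENNReal.ofReal ε * volume (Metric.ball x₀ ρ)) :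
    volume 𝒱₁ ≤ (15 : ℝ≥0∞) ^ n * ENNReal.ofReal ε * volume 𝒱₂ := by
  have hdens := Besicovitch.ae_tendsto_measure_inter_div volume 𝒱₁
  refine (measure_le_restrict_sep_of_ae hdens).trans ?_
  rw [← Measure.restrict_apply_univ 𝒱₂]
  refine measure_le_mul_of_forall_exists_radius _ _ (R := R₀) (by norm_num : (3 : ℝ) < 31 / 10) ?_
  rintro x ⟨hx, hxdens⟩
  obtain ⟨ρ, ⟨hρ, hρR⟩, hdense, hsparse⟩ := exists_maximal_radius_le_measure_ball_inter volume
    hsmall (exists_radius_mem_Ioc_le_measure_ball_inter volume hxdens hε' hR₀)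
  have hsub : ball x ρ ∩ Ω ⊆ 𝒱₂ := by
    by_contra hsub
    exact (hcond x (h₁Ω hx) ρ hρ hρR hsub).not_ge hdense
  refine ⟨ρ, hρ, hρR, ?_⟩
  rw [Measure.restrict_apply measurableSet_closedBall, Measure.restrict_apply measurableSet_ball]
  exact hΩ.volume_closedBall_inter_le hδ₀ hδ₀' (h₁Ω hx) hρ (hρR.trans hR₀') hsub
    (hsparse _ (by linarith))

/-- Reifenberg-type Vitali covering/density lemma: if `Ω` is `(δ₀, r₀)`-Reifenberg flat
with `0 < δ₀ < 1/8`, `𝒱₁, 𝒱₂ ⊆ Ω` measurable with `|𝒱₁| ≤ ε |B_{R₀}|`, and for all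
`x₀ ∈ Ω`, `ρ ∈ (0, R₀]`: `B_ρ(x₀) ∩ Ω ⊄ 𝒱₂ → |B_ρ(x₀) ∩ 𝒱₁| < ε |B_ρ(x₀)|`, then
`|𝒱₁| ≤ 15ⁿ ε |𝒱₂|`. -/
theorem reifenberg_vitali_density {n : ℕ} (Ω 𝒱₁ 𝒱₂ : Set (EuclideanSpace ℝ (Fin n)))
    (δ₀ r₀ R₀ ε : ℝ) (hδ₀ : 0 < δ₀) (hδ₀' : δ₀ < 1 / 8) (hr₀ : 0 < r₀)
    (hΩ : IsReifenbergFlat Ω δ₀ r₀)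
    (h𝒱₁ : MeasurableSet 𝒱₁) (h𝒱₂ : MeasurableSet 𝒱₂)
    (h₁Ω : 𝒱₁ ⊆ Ω) (h₂Ω : 𝒱₂ ⊆ Ω)
    (hR₀ : 0 < R₀) (hR₀' : R₀ ≤ r₀) (hε : 0 < ε) (hε' : ε < 1)
    (hsmall : volume 𝒱₁ ≤
      ENNReal.ofReal ε * volume (Metric.ball (0 : EuclideanSpace ℝ (Fin n)) R₀))
    (hcond : ∀ x₀ ∈ Ω, ∀ ρ : ℝ, 0 < ρ → ρ ≤ R₀ →
      ¬ (Metric.ball x₀ ρ ∩ Ω ⊆ 𝒱₂) →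
        volume (Metric.ball x₀ ρ ∩ 𝒱₁) < ENNReal.ofReal ε * volume (Metric.ball x₀ ρ)) :
    volume 𝒱₁ ≤ (15 : ℝ≥0∞) ^ n * ENNReal.ofReal ε * volume 𝒱₂ :=
  reifenberg_vitali_density_general Ω 𝒱₁ 𝒱₂ δ₀ r₀ R₀ ε hδ₀ hδ₀' hΩ h₁Ω hR₀ hR₀' hε' hsmall hcond
end
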